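/- Type preservation for processes: if Γ ⊢ P : C and P ⇝ Q in the small-step operational semantics of processes, then there exists a process type D such that C ⇝ D (process type reduction) and Γ ⊢ Q : D. -/

import Mathlib

/-- Interrupt handler annotations: elements of the greatest fixed point of
`Φ(X) = Op ⇒ (O × X)_⊥` where `O = Set Op`, encoded as prefix-closed partial
maps from nonempty paths (lists of operation names) to signal annotations. -/
structure IAnn (Op : Type) : Type where
  val : List Op → Option (Set Op)
  nil_none : val [] = none
  prefix_closed : ∀ l l', l ≠ [] → (val (l ++ l')).isSome → (val l).isSome

namespace IAnn

variable {Op : Type}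

/-- The coinductive order `⊑_I` on interrupt handler annotations. -/
def le (ι ι' : IAnn Op) : Prop :=
  ∀ l o, ι.val l = some o → ∃ o', ι'.val l = some o' ∧ o ⊆ o'

/-- The least annotation (everywhere ⊥). -/
def bot (Op : Type) : IAnn Op :=
  ⟨fun _ => none, rfl, fun _ _ _ h => by simp at h⟩

/-- Join on `(Set Op)_⊥`. -/
def ojoin (a b : Option (Set Op)) : Option (Set Op) :=
  match a, b with
  | some x, some y => some (x ∪ y)
  | some x, none => some x
  | none, y => y

lemma ojoin_isSome (a b : Option (Set Op)) :
    (ojoin a b).isSome ↔ a.isSome ∨ b.isSome := by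
  cases a <;> cases b <;> simp [ojoin]

/-- The pointwise join `ι ⊔ ι'` of interrupt handler annotations. -/
def join (ι ι' : IAnn Op) : IAnn Op where
  val l := ojoin (ι.val l) (ι'.val l)
  nil_none := by show ojoin (ι.val []) (ι'.val []) = none; rw [ι.nil_none, ι'.nil_none]; rfl
  prefix_closed := fun l l' hl h => by
    rcases (ojoin_isSome _ _).mp h with h | h
    · exact (ojoin_isSome _ _).mpr (Or.inl (ι.prefix_closed l l' hl h))
    · exact (ojoin_isSome _ _).mpr (Or.inr (ι'.prefix_closed l l' hl h))

/-- The subtree of `ι` at `op`, i.e. the second component of `ι(op)` when defined. -/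
def subtree (ι : IAnn Op) (op : Op) : IAnn Op where
  val l := match l with
    | [] => none
    | a :: t => ι.val (op :: a :: t)
  nil_none := rfl
  prefix_closed := fun l l' hl h => by
    match l with
    | [] => exact absurd rfl hl
    | a :: t =>
      simp only [List.cons_append] at h
      exact ι.prefix_closed (op :: a :: t) l' (by simp) h

variable [DecidableEq Op]

/-- `ι[op ↦ ⊥]`: set `ι` to be undefined at `op`. -/
def update (ι : IAnn Op) (op : Op) : IAnn Op where
  val l := match l with
    | [] => none
    | op' :: rest => if op' = op then none else ι.val (op' :: rest)
  nil_none := rfl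
  prefix_closed := fun l l' hl h => by
    match l with
    | [] => exact absurd rfl hl
    | a :: t =>
      simp only [List.cons_append] at h
      by_cases hao : a = op
      · simp [hao] at h
      · simp only [if_neg hao] at h ⊢
        exact ι.prefix_closed (a :: t) l' (by simp) h

/-- The singleton annotation `{ op ↦ (o, ι) }`. -/
def single (op : Op) (o : Set Op) (ι : IAnn Op) : IAnn Op where
  val l := match l with
    | [] => none
    | op' :: rest =>
        if op' = op then (if rest = [] then some o else ι.val rest) else none
  nil_none := rfl
  prefix_closed := fun l l' hl h => by
    match l with
    | [] => exact absurd rfl hl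
    | a :: t =>
      simp only [List.cons_append] at h
      by_cases hao : a = op
      · simp only [if_pos hao] at h ⊢
        match t with
        | [] => simp
        | b :: u =>
          simp only [List.cons_append] at h ⊢
          rw [if_neg (by simp)] at h
          rw [if_neg (by simp)]
          exact ι.prefix_closed (b :: u) l' (by simp) h
      · simp [hao] at h

/-- The action `op ↓ (o, ι)` of an interrupt on an effect annotation. -/
def act (op : Op) (p : Set Op × IAnn Op) : Set Op × IAnn Op :=
  match p.2.val [op] with
  | some o' => (p.1 ∪ o', join (update p.2 op) (p.2.subtree op))
  | none => p

/-- The product order `⊑_{O×I}` on effect annotations. -/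
def leOI (p q : Set Op × IAnn Op) : Prop := p.1 ⊆ q.1 ∧ le p.2 q.2

/-- The action `ops ↓↓ (o, ι)` of a list of interrupts on an effect annotation. -/
def actList : List Op → Set Op × IAnn Op → Set Op × IAnn Op
  | [], p => p
  | op :: ops, p => act op (actList ops p)

end IAnn
/-- Process types `C, D ::= X!!(o,ι) | C || D`. -/
inductive PTy (V Op : Type) : Type where
  | run : V → Set Op → IAnn Op → PTy V Op
  | par : PTy V Op → PTy V Op → PTy V Op

namespace PTy

variable {V Op : Type} [DecidableEq Op]

/-- The interrupt action `op ↓ C` on process types. -/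
def pact (op : Op) : PTy V Op → PTy V Op
  | run X o ι => run X (IAnn.act op (o, ι)).1 (IAnn.act op (o, ι)).2
  | par C D => par (pact op C) (pact op D)

/-- The signal annotations `signals-of(C)` of a process type. -/
def signalsOf : PTy V Op → Set Op
  | run _ o _ => o
  | par C D => signalsOf C ∪ signalsOf D

/-- Process type reduction `C ⇝ D`. -/
inductive Red : PTy V Op → PTy V Op → Prop where
  | base (X : V) (o : Set Op) (ι : IAnn Op) : Red (run X o ι) (run X o ι)
  | act (X : V) (ops : List Op) (op : Op) (o : Set Op) (ι : IAnn Op) :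
      Red (run X (IAnn.actList ops (o, ι)).1 (IAnn.actList ops (o, ι)).2)
          (run X (IAnn.actList ops (IAnn.act op (o, ι))).1
                 (IAnn.actList ops (IAnn.act op (o, ι))).2)
  | par {C C' D D' : PTy V Op} : Red C C' → Red D D' → Red (par C D) (par C' D')
  | spawnL (X : V) (o : Set Op) (ι : IAnn Op) (Y : V) (o' : Set Op) (ι' : IAnn Op) :
      Red (run X o ι) (par (run X o ι) (run Y o' ι'))
  | spawnR (X : V) (o : Set Op) (ι : IAnn Op) (Y : V) (o' : Set Op) (ι' : IAnn Op) :
      Red (run Y o' ι') (par (run X o ι) (run Y o' ι'))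

end PTy

mutual
/-- Values of the λ_æ calculus (de Bruijn representation). -/
inductive Val (Op : Type) : Type where
  | var : ℕ → Val Op
  | unit : Val Op
  | pair : Val Op → Val Op → Val Op
  | inl : Val Op → Val Op
  | inr : Val Op → Val Op
  | lam : Comp Op → Val Op
  | prom : Val Op → Val Op                  -- fulfilled promise ⟨V⟩
  | box : Val Op → Val Op                   -- boxed value [V]

/-- Computations of the λ_æ calculus (de Bruijn representation). -/
inductive Comp (Op : Type) : Type where
  | ret : Val Op → Comp Op
  | letin : Comp Op → Comp Op → Comp Op     -- let x = M in N   (N binds 1)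
  | app : Val Op → Val Op → Comp Op
  | matchPair : Val Op → Comp Op → Comp Op  -- match V with ⟨x,y⟩ ↦ M  (M binds 2)
  | matchEmpty : Val Op → Comp Op
  | matchSum : Val Op → Comp Op → Comp Op → Comp Op  -- (each branch binds 1)
  | sig : Op → Val Op → Comp Op → Comp Op   -- ↑op(V, M)
  | int : Op → Val Op → Comp Op → Comp Op   -- ↓op(V, M)
  | handler : Op → Comp Op → Val Op → Comp Op → Comp Op
      -- promise (op x r s ↦ M) @ V as p in N   (M binds 3: x,r,s; N binds 1: p)
  | await : Val Op → Comp Op → Comp Op      -- await V until ⟨x⟩ in M  (M binds 1)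
  | unbox : Val Op → Comp Op → Comp Op      -- unbox V as [x] in M  (M binds 1)
  | spawn : Comp Op → Comp Op → Comp Op     -- spawn (M, N)
end

/-- Lifting a renaming under one binder. -/
def liftR (ρ : ℕ → ℕ) : ℕ → ℕ
  | 0 => 0
  | n + 1 => ρ n + 1

mutual
def renameV {Op : Type} (ρ : ℕ → ℕ) : Val Op → Val Op
  | .var n => .var (ρ n)
  | .unit => .unit
  | .pair a b => .pair (renameV ρ a) (renameV ρ b)
  | .inl a => .inl (renameV ρ a)
  | .inr a => .inr (renameV ρ a)
  | .lam m => .lam (renameC (liftR ρ) m)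
  | .prom a => .prom (renameV ρ a)
  | .box a => .box (renameV ρ a)

def renameC {Op : Type} (ρ : ℕ → ℕ) : Comp Op → Comp Op
  | .ret v => .ret (renameV ρ v)
  | .letin m n => .letin (renameC ρ m) (renameC (liftR ρ) n)
  | .app v w => .app (renameV ρ v) (renameV ρ w)
  | .matchPair v m => .matchPair (renameV ρ v) (renameC (liftR (liftR ρ)) m)
  | .matchEmpty v => .matchEmpty (renameV ρ v)
  | .matchSum v m n =>
      .matchSum (renameV ρ v) (renameC (liftR ρ) m) (renameC (liftR ρ) n)
  | .sig op v m => .sig op (renameV ρ v) (renameC ρ m)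
  | .int op v m => .int op (renameV ρ v) (renameC ρ m)
  | .handler op m v n =>
      .handler op (renameC (liftR (liftR (liftR ρ))) m) (renameV ρ v)
        (renameC (liftR ρ) n)
  | .await v m => .await (renameV ρ v) (renameC (liftR ρ) m)
  | .unbox v m => .unbox (renameV ρ v) (renameC (liftR ρ) m)
  | .spawn m n => .spawn (renameC ρ m) (renameC ρ n)
end

/-- Lifting a substitution under one binder. -/
def liftS {Op : Type} (σ : ℕ → Val Op) : ℕ → Val Op
  | 0 => .var 0
  | n + 1 => renameV Nat.succ (σ n)

mutual
def substV {Op : Type} (σ : ℕ → Val Op) : Val Op → Val Op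
  | .var n => σ n
  | .unit => .unit
  | .pair a b => .pair (substV σ a) (substV σ b)
  | .inl a => .inl (substV σ a)
  | .inr a => .inr (substV σ a)
  | .lam m => .lam (substC (liftS σ) m)
  | .prom a => .prom (substV σ a)
  | .box a => .box (substV σ a)

def substC {Op : Type} (σ : ℕ → Val Op) : Comp Op → Comp Op
  | .ret v => .ret (substV σ v)
  | .letin m n => .letin (substC σ m) (substC (liftS σ) n)
  | .app v w => .app (substV σ v) (substV σ w)
  | .matchPair v m => .matchPair (substV σ v) (substC (liftS (liftS σ)) m)
  | .matchEmpty v => .matchEmpty (substV σ v)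
  | .matchSum v m n =>
      .matchSum (substV σ v) (substC (liftS σ) m) (substC (liftS σ) n)
  | .sig op v m => .sig op (substV σ v) (substC σ m)
  | .int op v m => .int op (substV σ v) (substC σ m)
  | .handler op m v n =>
      .handler op (substC (liftS (liftS (liftS σ))) m) (substV σ v)
        (substC (liftS σ) n)
  | .await v m => .await (substV σ v) (substC (liftS σ) m)
  | .unbox v m => .unbox (substV σ v) (substC (liftS σ) m)
  | .spawn m n => .spawn (substC σ m) (substC σ n)
end

/-- Substitution `[V/0]` of a single value for the last-bound variable. -/
def sub1 {Op : Type} (v : Val Op) : ℕ → Val Op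
  | 0 => v
  | n + 1 => .var n

/-- Substitution `[V/1, W/0]` for the two variables of a pair match. -/
def sub2 {Op : Type} (v w : Val Op) : ℕ → Val Op
  | 0 => w
  | 1 => v
  | n + 2 => .var n

/-- Substitution `[V/x, R/r, W/s]` (`x = 2`, `r = 1`, `s = 0`) for the three
variables of an interrupt handler body. -/
def sub3 {Op : Type} (v r w : Val Op) : ℕ → Val Op
  | 0 => w
  | 1 => r
  | 2 => v
  | n + 3 => .var n

/-- The reinstallation function
`R = fun s' ↦ promise (op x r s ↦ M) @ s' as p in return p`. -/
def reinstall {Op : Type} (op : Op) (M : Comp Op) : Val Op :=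
  .lam (.handler op (renameC (liftR (liftR (liftR Nat.succ))) M)
          (.var 0) (.ret (.var 0)))

/-- Small-step operational semantics of computations. -/
inductive Step {Op : Type} : Comp Op → Comp Op → Prop where
  -- standard computation rules
  | beta {M V} : Step (.app (.lam M) V) (substC (sub1 V) M)
  | letRet {V N} : Step (.letin (.ret V) N) (substC (sub1 V) N)
  | matchPair {V W M} : Step (.matchPair (.pair V W) M) (substC (sub2 V W) M)
  | matchInl {V M N} : Step (.matchSum (.inl V) M N) (substC (sub1 V) M)
  | matchInr {W M N} : Step (.matchSum (.inr W) M N) (substC (sub1 W) N)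
  -- algebraicity of signals, interrupt handlers, awaiting, and process creation
  | letSig {op V M N} : Step (.letin (.sig op V M) N) (.sig op V (.letin M N))
  | letHandler {op M V N₁ N₂} :
      Step (.letin (.handler op M V N₁) N₂)
           (.handler op M V (.letin N₁ (renameC (liftR Nat.succ) N₂)))
  | letAwait {V M N} :
      Step (.letin (.await V M) N)
           (.await V (.letin M (renameC (liftR Nat.succ) N)))
  | letSpawn {M N₁ N₂} : Step (.letin (.spawn M N₁) N₂) (.spawn M (.letin N₁ N₂))
  -- commutativity of signals and process creation with interrupt handlers
  | handlerSig {op M V op' W N} :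
      Step (.handler op M V (.sig op' (renameV Nat.succ W) N))
           (.sig op' W (.handler op M V N))
  | handlerSpawn {op M V N₁ N₂} :
      Step (.handler op M V (.spawn (renameC Nat.succ N₁) N₂))
           (.spawn N₁ (.handler op M V N₂))
  -- interrupt propagation
  | intRet {op V W} : Step (.int op V (.ret W)) (.ret W)
  | intSig {op V op' W M} :
      Step (.int op V (.sig op' W M)) (.sig op' W (.int op V M))
  | intHandler {op V M W N} :
      Step (.int op V (.handler op M W N))
           (.letin (substC (sub3 V (reinstall op M) W) M)
                   (.int op (renameV Nat.succ V) N))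
  | intHandlerNeq {op op' V M W N} :
      op ≠ op' →
      Step (.int op' V (.handler op M W N))
           (.handler op M W (.int op' (renameV Nat.succ V) N))
  | intAwait {op V W M} :
      Step (.int op V (.await W M)) (.await W (.int op (renameV Nat.succ V) M))
  | intSpawn {op V M N} : Step (.int op V (.spawn M N)) (.spawn M (.int op V N))
  -- awaiting a fulfilled promise, and unboxing
  | awaitProm {V M} : Step (.await (.prom V) M) (substC (sub1 V) M)
  | unboxBox {V M} : Step (.unbox (.box V) M) (substC (sub1 V) M)
  -- evaluation contexts
  | ctxLet {M M' N} : Step M M' → Step (.letin M N) (.letin M' N)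
  | ctxSig {op V M M'} : Step M M' → Step (.sig op V M) (.sig op V M')
  | ctxInt {op V M M'} : Step M M' → Step (.int op V M) (.int op V M')
  | ctxHandler {op M V N N'} :
      Step N N' → Step (.handler op M V N) (.handler op M V N')
  | ctxSpawn {M N N'} : Step N N' → Step (.spawn M N) (.spawn M N')

/-- Result forms `RunRes⟨Ψ | M⟩` of computations running inside a process;
`Ψ` is the set of (de Bruijn indices of) promise variables bound by
enveloping interrupt handlers. -/
inductive RunRes {Op : Type} : Set ℕ → Comp Op → Prop where
  | ret {Ψ V} : RunRes Ψ (.ret V)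
  | await {Ψ : Set ℕ} {p M} : p ∈ Ψ → RunRes Ψ (.await (.var p) M)
  | handler {Ψ : Set ℕ} {op M V N} :
      RunRes (insert 0 {n | ∃ m ∈ Ψ, n = m + 1}) N →
      RunRes Ψ (.handler op M V N)

/-- Result forms `CompRes⟨Ψ | M⟩` of computations. -/
inductive CompRes {Op : Type} : Set ℕ → Comp Op → Prop where
  | run {Ψ M} : RunRes Ψ M → CompRes Ψ M
  | sig {Ψ op V M} : CompRes Ψ M → CompRes Ψ (.sig op V M)
  | spawn {Ψ M N} : CompRes Ψ N → CompRes Ψ (.spawn M N)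

/-- Value types of the λ_æ calculus. -/
inductive VTy (Op : Type) : Type where
  | base : VTy Op
  | unit : VTy Op
  | empty : VTy Op
  | prod : VTy Op → VTy Op → VTy Op
  | sum : VTy Op → VTy Op → VTy Op
  | fn : VTy Op → VTy Op → Set Op → IAnn Op → VTy Op  -- X → Y!(o,ι)
  | prom : VTy Op → VTy Op                            -- ⟨X⟩
  | box : VTy Op → VTy Op                             -- [X]

/-- Mobile types: ground types extended with the modal box type. -/
inductive Mobile {Op : Type} : VTy Op → Prop where
  | base : Mobile .base
  | unit : Mobile .unit
  | empty : Mobile .empty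
  | prod {A B} : Mobile A → Mobile B → Mobile (.prod A B)
  | sum {A B} : Mobile A → Mobile B → Mobile (.sum A B)
  | box {X} : Mobile (.box X)

/-- Typing context entries: variable bindings and Fitch-style locks. -/
inductive CtxE (Op : Type) : Type where
  | tyvar : VTy Op → CtxE Op
  | lock : CtxE Op

/-- Typing contexts (most recent entry first). -/
abbrev Ctx (Op : Type) := List (CtxE Op)

/-- `Lookup Γ n X b`: the de Bruijn variable `n` has type `X` in `Γ`, and
`b` records whether a lock `🔒` occurs between the binding and the use. -/
inductive Lookup {Op : Type} : Ctx Op → ℕ → VTy Op → Bool → Prop where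
  | here {Γ X} : Lookup (CtxE.tyvar X :: Γ) 0 X false
  | thereVar {Γ n X Y b} : Lookup Γ n X b → Lookup (CtxE.tyvar Y :: Γ) (n + 1) X b
  | thereLock {Γ n X b} : Lookup Γ n X b → Lookup (CtxE.lock :: Γ) n X true

mutual
/-- Value typing `Γ ⊢ V : X` of the λ_æ calculus, relative to a signature
`sg` assigning payload types to signal/interrupt names. -/
inductive HasV {Op : Type} [DecidableEq Op] (sg : Op → VTy Op) :
    Ctx Op → Val Op → VTy Op → Prop where
  | var {Γ n X b} : Lookup Γ n X b → (b = true → Mobile X) →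
      HasV sg Γ (.var n) X
  | unit {Γ} : HasV sg Γ .unit .unit
  | pair {Γ V W X Y} : HasV sg Γ V X → HasV sg Γ W Y →
      HasV sg Γ (.pair V W) (.prod X Y)
  | inl {Γ V X Y} : HasV sg Γ V X → HasV sg Γ (.inl V) (.sum X Y)
  | inr {Γ W X Y} : HasV sg Γ W Y → HasV sg Γ (.inr W) (.sum X Y)
  | lam {Γ M X Y o ι} : HasC sg (CtxE.tyvar X :: Γ) M Y o ι →
      HasV sg Γ (.lam M) (.fn X Y o ι)
  | prom {Γ V X} : HasV sg Γ V X → HasV sg Γ (.prom V) (.prom X)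
  | box {Γ V X} : HasV sg (CtxE.lock :: Γ) V X → HasV sg Γ (.box V) (.box X)

/-- Computation typing `Γ ⊢ M : X!(o,ι)` of the λ_æ calculus. -/
inductive HasC {Op : Type} [DecidableEq Op] (sg : Op → VTy Op) :
    Ctx Op → Comp Op → VTy Op → Set Op → IAnn Op → Prop where
  | ret {Γ V X o ι} : HasV sg Γ V X → HasC sg Γ (.ret V) X o ι
  | letin {Γ M N X Y o ι} : HasC sg Γ M X o ι →
      HasC sg (CtxE.tyvar X :: Γ) N Y o ι → HasC sg Γ (.letin M N) Y o ι
  | app {Γ V W X Y o ι} : HasV sg Γ V (.fn X Y o ι) → HasV sg Γ W X →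
      HasC sg Γ (.app V W) Y o ι
  | matchPair {Γ V M X Y Z o ι} : HasV sg Γ V (.prod X Y) →
      HasC sg (CtxE.tyvar Y :: CtxE.tyvar X :: Γ) M Z o ι →
      HasC sg Γ (.matchPair V M) Z o ι
  | matchEmpty {Γ V Z o ι} : HasV sg Γ V .empty →
      HasC sg Γ (.matchEmpty V) Z o ι
  | matchSum {Γ V M N X Y Z o ι} : HasV sg Γ V (.sum X Y) →
      HasC sg (CtxE.tyvar X :: Γ) M Z o ι →
      HasC sg (CtxE.tyvar Y :: Γ) N Z o ι →
      HasC sg Γ (.matchSum V M N) Z o ι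
  | sig {Γ op V M X o ι} : op ∈ o → HasV sg Γ V (sg op) →
      HasC sg Γ M X o ι → HasC sg Γ (.sig op V M) X o ι
  | int {Γ op V M X o ι} : HasV sg Γ V (sg op) → HasC sg Γ M X o ι →
      HasC sg Γ (.int op V M) X (IAnn.act op (o, ι)).1 (IAnn.act op (o, ι)).2
  | handler {Γ op M V N S X Y o ι o' ι' o''} :
      ι.val [op] = some o'' → o' ⊆ o'' → IAnn.le ι' (ι.subtree op) →
      HasC sg (CtxE.tyvar S ::
               CtxE.tyvar (.fn S (.prom X) (∅ : Set Op) (IAnn.single op o' ι')) ::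
               CtxE.tyvar (sg op) :: Γ) M (.prom X) o' ι' →
      HasV sg Γ V S →
      HasC sg (CtxE.tyvar (.prom X) :: Γ) N Y o ι →
      HasC sg Γ (.handler op M V N) Y o ι
  | await {Γ V M X Y o ι} : HasV sg Γ V (.prom X) →
      HasC sg (CtxE.tyvar X :: Γ) M Y o ι → HasC sg Γ (.await V M) Y o ι
  | unbox {Γ V M X Y o ι} : HasV sg Γ V (.box X) →
      HasC sg (CtxE.tyvar X :: Γ) M Y o ι → HasC sg Γ (.unbox V M) Y o ι
  | spawn {Γ M N X Y o ι o' ι'} : HasC sg (CtxE.lock :: Γ) M X o ι →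
      HasC sg Γ N Y o' ι' → HasC sg Γ (.spawn M N) Y o' ι'
  | subsume {Γ M X o ι o' ι'} : HasC sg Γ M X o ι → o ⊆ o' → IAnn.le ι ι' →
      HasC sg Γ M X o' ι'
end

/-- Processes of the λ_æ calculus. -/
inductive Proc (Op : Type) : Type where
  | run : Comp Op → Proc Op
  | par : Proc Op → Proc Op → Proc Op
  | sig : Op → Val Op → Proc Op → Proc Op   -- ↑op(V, P)
  | int : Op → Val Op → Proc Op → Proc Op   -- ↓op(V, P)

/-- Small-step operational semantics of processes. -/
inductive PStep {Op : Type} : Proc Op → Proc Op → Prop where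
  | run {M N} : Step M N → PStep (.run M) (.run N)
  | hoist {op V M} : PStep (.run (.sig op V M)) (.sig op V (.run M))
  | spawn {M N} : PStep (.run (.spawn M N)) (.par (.run M) (.run N))
  | bcastL {op V P Q} :
      PStep (.par (.sig op V P) Q) (.sig op V (.par P (.int op V Q)))
  | bcastR {op V P Q} :
      PStep (.par P (.sig op V Q)) (.sig op V (.par (.int op V P) Q))
  | intRun {op V M} : PStep (.int op V (.run M)) (.run (.int op V M))
  | intPar {op V P Q} :
      PStep (.int op V (.par P Q)) (.par (.int op V P) (.int op V Q))
  | intSig {op V op' W P} :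
      PStep (.int op V (.sig op' W P)) (.sig op' W (.int op V P))
  | ctxParL {P P' Q} : PStep P P' → PStep (.par P Q) (.par P' Q)
  | ctxParR {P Q Q'} : PStep Q Q' → PStep (.par P Q) (.par P Q')
  | ctxSig {op V P P'} : PStep P P' → PStep (.sig op V P) (.sig op V P')
  | ctxInt {op V P P'} : PStep P P' → PStep (.int op V P) (.int op V P')

/-- Process typing `Γ ⊢ P : C`. -/
inductive HasP {Op : Type} [DecidableEq Op] (sg : Op → VTy Op) :
    Ctx Op → Proc Op → PTy (VTy Op) Op → Prop where
  | run {Γ M X o ι} : HasC sg Γ M X o ι →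
      HasP sg Γ (.run M) (PTy.run X o ι)
  | par {Γ P Q C D} : HasP sg Γ P C → HasP sg Γ Q D →
      HasP sg Γ (.par P Q) (PTy.par C D)
  | sig {Γ op V P C} : op ∈ PTy.signalsOf C → HasV sg Γ V (sg op) →
      HasP sg Γ P C → HasP sg Γ (.sig op V P) C
  | int {Γ op V P C} : HasV sg Γ V (sg op) → HasP sg Γ P C →
      HasP sg Γ (.int op V P) (PTy.pact op C)

/-!
Preservation for processes rests on subject reduction for computations and on three properties
of process type reduction: the interrupt action `op ↓ -` is itself a reduction, it commutes with
reduction, and reduction only enlarges `signals-of`, so the side condition of the signal rule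
survives every step.

The last property does not follow from monotonicity of the action in `⊑`, since triggering a
handler deletes its node. What survives is each label, either in the signal set or at a node whose
path is a suffix of its old path (`IAnn.DomBy`), and this invariant is stable under further
actions.

Subject reduction for computations is the usual argument. Every typing derivation is a
syntax-directed rule followed by subsumptions, which gives inversion. Renaming, substitution and
strengthening are proved for context maps that send usable variables to usable ones, which handles
locks uniformly: a value of mobile type may be moved under a lock. When an interrupt triggers a
handler, the reinstallation function has the type of the handler's resumption, and the handler's
effects are bounded by what `op ↓ -` adds to the signal set and to the interrupt annotation.
-/

namespace IAnn

variable {Op : Type}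

theorem le_refl (ι : IAnn Op) : le ι ι := fun _ o h => ⟨o, h, subset_rfl⟩

theorem le_trans {ι₁ ι₂ ι₃ : IAnn Op} (h₁₂ : le ι₁ ι₂) (h₂₃ : le ι₂ ι₃) : le ι₁ ι₃ := by
  intro l o h
  obtain ⟨o', h', hs⟩ := h₁₂ l o h
  obtain ⟨o'', h'', hs'⟩ := h₂₃ l o' h'
  exact ⟨o'', h'', hs.trans hs'⟩

theorem subtree_mono {ι ι' : IAnn Op} (h : le ι ι') (op : Op) :
    le (ι.subtree op) (ι'.subtree op)
  | [], _, hl => by simp [subtree] at hl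
  | a :: t, o, hl => h (op :: a :: t) o hl

theorem le_join_left (ι ι' : IAnn Op) : le ι (join ι ι') := by
  intro l o h
  change ∃ o', ojoin (ι.val l) (ι'.val l) = some o' ∧ o ⊆ o'
  rw [h]; cases ι'.val l <;> simp [ojoin]

theorem le_join_right (ι ι' : IAnn Op) : le ι' (join ι ι') := by
  intro l o h
  change ∃ o', ojoin (ι.val l) (ι'.val l) = some o' ∧ o ⊆ o'
  rw [h]; cases ι.val l <;> simp [ojoin]

theorem ne_nil_of_val_eq_some {ι : IAnn Op} {l : List Op} {o : Set Op}
    (h : ι.val l = some o) : l ≠ [] := by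
  rintro rfl; simp [ι.nil_none] at h

theorem mem_of_ojoin_eq_some {a b : Option (Set Op)} {o : Set Op} {x : Op}
    (h : ojoin a b = some o) (hx : x ∈ o) :
    (∃ o', a = some o' ∧ x ∈ o') ∨ (∃ o', b = some o' ∧ x ∈ o') := by
  cases a <;> cases b <;>
    simp only [ojoin, Option.some.injEq, reduceCtorEq] at h <;> subst h <;> simp_all

/-- Where the label `x` of the node at path `l` can be found after interrupt actions: triggering
a handler moves its own label into the signal set and its subtree one level up. -/
def Covered (q : Set Op × IAnn Op) (l : List Op) (x : Op) : Prop :=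
  x ∈ q.1 ∨ ∃ s o, s ≠ [] ∧ s <:+ l ∧ q.2.val s = some o ∧ x ∈ o

def DomBy (p q : Set Op × IAnn Op) : Prop :=
  p.1 ⊆ q.1 ∧ ∀ l o, p.2.val l = some o → ∀ x ∈ o, Covered q l x

theorem Covered.of_suffix {q : Set Op × IAnn Op} {s l : List Op} {x : Op}
    (h : Covered q s x) (hsl : s <:+ l) : Covered q l x := by
  rcases h with hx | ⟨s', o, hs', hs's, hval, hx⟩
  · exact .inl hx
  · exact .inr ⟨s', o, hs', hs's.trans hsl, hval, hx⟩

variable [DecidableEq Op]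

theorem update_le (ι : IAnn Op) (op : Op) : le (update ι op) ι
  | [], _, h => by simp [update] at h
  | a :: t, o, h => by
    by_cases ha : a = op
    · simp [update, ha] at h
    · exact ⟨o, by simpa [update, ha] using h, subset_rfl⟩

theorem update_val_cons_of_ne (ι : IAnn Op) {op a : Op} (ha : a ≠ op) (t : List Op) :
    (update ι op).val (a :: t) = ι.val (a :: t) := by
  simp [update, ha]

theorem act_of_val_eq_some {p : Set Op × IAnn Op} {op : Op} {o : Set Op}
    (h : p.2.val [op] = some o) :
    act op p = (p.1 ∪ o, join (update p.2 op) (p.2.subtree op)) := by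
  unfold act; rw [h]

theorem act_of_val_eq_none {p : Set Op × IAnn Op} {op : Op} (h : p.2.val [op] = none) :
    act op p = p := by
  unfold act; rw [h]

theorem fst_subset_fst_act (op : Op) (p : Set Op × IAnn Op) : p.1 ⊆ (act op p).1 := by
  unfold act
  cases p.2.val [op] <;> simp

theorem subset_fst_act {p : Set Op × IAnn Op} {op : Op} {o : Set Op}
    (h : p.2.val [op] = some o) : o ⊆ (act op p).1 := by
  rw [act_of_val_eq_some h]; exact Set.subset_union_right

theorem subtree_le_snd_act {p : Set Op × IAnn Op} {op : Op} {o : Set Op}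
    (h : p.2.val [op] = some o) : le (p.2.subtree op) (act op p).2 := by
  rw [act_of_val_eq_some h]; exact le_join_right _ _

theorem update_le_snd_act {p : Set Op × IAnn Op} {op : Op} {o : Set Op}
    (h : p.2.val [op] = some o) : le (update p.2 op) (act op p).2 := by
  rw [act_of_val_eq_some h]; exact le_join_left _ _

theorem exists_val_act_cons_of_ne {p : Set Op × IAnn Op} {op a : Op} (ha : a ≠ op)
    {t : List Op} {o : Set Op} (h : p.2.val (a :: t) = some o) :
    ∃ o', (act op p).2.val (a :: t) = some o' ∧ o ⊆ o' := by
  cases hp : p.2.val [op] with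
  | none => exact ⟨o, by rw [act_of_val_eq_none hp]; exact h, subset_rfl⟩
  | some _ =>
    exact update_le_snd_act hp _ _ (by rwa [update_val_cons_of_ne _ ha])

theorem subtree_le_subtree_act_of_ne {p : Set Op × IAnn Op} {op op' : Op} (hne : op ≠ op') :
    le (p.2.subtree op) ((act op' p).2.subtree op)
  | [], _, hl => by simp [subtree] at hl
  | _ :: _, _, hl => exists_val_act_cons_of_ne hne hl

theorem single_val_singleton (op : Op) (o : Set Op) (ι : IAnn Op) :
    (single op o ι).val [op] = some o := by
  simp [single]

theorem le_subtree_single (op : Op) (o : Set Op) (ι : IAnn Op) :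
    le ι ((single op o ι).subtree op)
  | [], _, h => by simp [ι.nil_none] at h
  | a :: t, o', h => ⟨o', by simpa [subtree, single] using h, subset_rfl⟩

theorem covered_act_of_val {q : Set Op × IAnn Op} {s : List Op} {o : Set Op} {x : Op}
    (op : Op) (hs : q.2.val s = some o) (hx : x ∈ o) : Covered (act op q) s x := by
  cases hq : q.2.val [op] with
  | none =>
    rw [act_of_val_eq_none hq]
    exact .inr ⟨s, o, ne_nil_of_val_eq_some hs, List.suffix_refl s, hs, hx⟩
  | some o₁ =>
    match s, hs with
    | [], hs => simp [q.2.nil_none] at hs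
    | a :: t, hs =>
      by_cases ha : a = op
      · subst ha
        match t, hs with
        | [], hs =>
          rw [hq] at hs; cases hs
          exact .inl (subset_fst_act hq hx)
        | b :: u, hs =>
          obtain ⟨z, hz, hoz⟩ := subtree_le_snd_act hq (b :: u) o hs
          exact .inr ⟨b :: u, z, List.cons_ne_nil _ _, List.suffix_cons a _, hz, hoz hx⟩
      · obtain ⟨z, hz, hoz⟩ := exists_val_act_cons_of_ne ha hs
        exact .inr ⟨a :: t, z, List.cons_ne_nil _ _, List.suffix_refl _, hz, hoz hx⟩

theorem Covered.act {q : Set Op × IAnn Op} {l : List Op} {x : Op} (h : Covered q l x)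
    (op : Op) : Covered (IAnn.act op q) l x := by
  rcases h with hx | ⟨s, o, -, hsl, hs, hx⟩
  · exact .inl (fst_subset_fst_act op q hx)
  · exact (covered_act_of_val op hs hx).of_suffix hsl

theorem Covered.mem_fst_act {q : Set Op × IAnn Op} {op x : Op} (h : Covered q [op] x) :
    x ∈ (IAnn.act op q).1 := by
  rcases h with hx | ⟨s, o, hs₀, hs, hval, hx⟩
  · exact fst_subset_fst_act op q hx
  · obtain rfl : s = [op] := by simpa [List.suffix_nil, hs₀] using List.suffix_cons_iff.1 hs
    exact subset_fst_act hval hx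

theorem Covered.act_cons {q : Set Op × IAnn Op} {op x : Op} {l : List Op}
    (h : Covered q (op :: l) x) (hl : l ≠ []) : Covered (IAnn.act op q) l x := by
  rcases h with hx | ⟨s, o, hs₀, hs, hval, hx⟩
  · exact .inl (fst_subset_fst_act op q hx)
  rcases List.suffix_cons_iff.1 hs with rfl | hsl
  · obtain ⟨a, t, rfl⟩ := List.exists_cons_of_ne_nil hl
    obtain ⟨o₁, hq⟩ := Option.isSome_iff_exists.1 <|
      q.2.prefix_closed [op] (a :: t) (List.cons_ne_nil _ _) (by simp [hval])
    obtain ⟨z, hz, hoz⟩ := subtree_le_snd_act hq (a :: t) o hval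
    exact .inr ⟨a :: t, z, hl, List.suffix_refl _, hz, hoz hx⟩
  · exact (covered_act_of_val op hval hx).of_suffix hsl

theorem domBy_act (op : Op) (p : Set Op × IAnn Op) : DomBy p (act op p) :=
  ⟨fst_subset_fst_act op p, fun _ _ h _ hx => covered_act_of_val op h hx⟩

theorem DomBy.act {p q : Set Op × IAnn Op} (h : DomBy p q) (op : Op) :
    DomBy (IAnn.act op p) (IAnn.act op q) := by
  cases hp : p.2.val [op] with
  | none =>
    rw [act_of_val_eq_none hp]
    exact ⟨h.1.trans (fst_subset_fst_act op q), fun l o hl x hx => Covered.act (h.2 l o hl x hx) op⟩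
  | some o₁ =>
    rw [act_of_val_eq_some hp]
    refine ⟨Set.union_subset (h.1.trans (fst_subset_fst_act op q))
      fun x hx => Covered.mem_fst_act (h.2 [op] o₁ hp x hx), fun l o hl x hx => ?_⟩
    rcases mem_of_ojoin_eq_some hl hx with ⟨o', hu, hx'⟩ | ⟨o', ht, hx'⟩
    · obtain ⟨o'', hval, ho'⟩ := update_le p.2 op l o' hu
      exact Covered.act (h.2 l o'' hval x (ho' hx')) op
    · match l, ht with
      | [], ht => simp [subtree] at ht
      | a :: t, ht => exact Covered.act_cons (h.2 _ o' ht x hx') (List.cons_ne_nil a t)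

theorem DomBy.actList {p q : Set Op × IAnn Op} (h : DomBy p q) :
    ∀ ops : List Op, DomBy (actList ops p) (actList ops q)
  | [] => h
  | op :: ops => (h.actList ops).act op

theorem fst_actList_subset_actList_act (ops : List Op) (op : Op) (p : Set Op × IAnn Op) :
    (actList ops p).1 ⊆ (actList ops (act op p)).1 :=
  ((domBy_act op p).actList ops).1

end IAnn

namespace PTy

variable {V Op : Type} [DecidableEq Op]

theorem Red.refl : ∀ C : PTy V Op, Red C C
  | .run X o ι => .base X o ι
  | .par C D => .par (Red.refl C) (Red.refl D)

theorem red_pact (op : Op) : ∀ C : PTy V Op, Red C (pact op C)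
  | .run X o ι => .act X [] op o ι
  | .par C D => .par (red_pact op C) (red_pact op D)

theorem Red.pact {C D : PTy V Op} (h : Red C D) (op : Op) : Red (pact op C) (pact op D) := by
  induction h with
  | base X o ι => exact Red.refl _
  | act X ops op' o ι => exact .act X (op :: ops) op' o ι
  | par _ _ ihC ihD => exact .par ihC ihD
  | spawnL X o ι Y o' ι' => exact .spawnL X _ _ Y _ _
  | spawnR X o ι Y o' ι' => exact .spawnR X _ _ Y _ _

theorem signalsOf_subset_pact (op : Op) : ∀ C : PTy V Op, signalsOf C ⊆ signalsOf (pact op C)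
  | .run _ o ι => IAnn.fst_subset_fst_act op (o, ι)
  | .par C D => Set.union_subset_union (signalsOf_subset_pact op C) (signalsOf_subset_pact op D)

theorem Red.signalsOf_subset {C D : PTy V Op} (h : Red C D) : signalsOf C ⊆ signalsOf D := by
  induction h with
  | base => exact subset_rfl
  | act X ops op o ι => exact IAnn.fst_actList_subset_actList_act ops op (o, ι)
  | par _ _ ihC ihD => exact Set.union_subset_union ihC ihD
  | spawnL => exact Set.subset_union_left
  | spawnR => exact Set.subset_union_right

end PTy

section Contexts

variable {Op : Type}

/-- The premise of the variable rule of `HasV`. -/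
def Usable (Γ : Ctx Op) (n : ℕ) (X : VTy Op) : Prop :=
  ∃ b, Lookup Γ n X b ∧ (b = true → Mobile X)

theorem usable_zero (Γ : Ctx Op) (X : VTy Op) : Usable (CtxE.tyvar X :: Γ) 0 X :=
  ⟨false, .here, nofun⟩

theorem Usable.eq_of_zero {Γ : Ctx Op} {A X : VTy Op} (h : Usable (CtxE.tyvar A :: Γ) 0 X) :
    X = A := by
  obtain ⟨_, hl, -⟩ := h
  cases hl; rfl

theorem usable_succ_iff {Γ : Ctx Op} {A X : VTy Op} {n : ℕ} :
    Usable (CtxE.tyvar A :: Γ) (n + 1) X ↔ Usable Γ n X := by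
  constructor
  · rintro ⟨b, hl, hm⟩
    cases hl with | thereVar hl => exact ⟨b, hl, hm⟩
  · rintro ⟨b, hl, hm⟩
    exact ⟨b, .thereVar hl, hm⟩

theorem usable_lock_iff {Γ : Ctx Op} {X : VTy Op} {n : ℕ} :
    Usable (CtxE.lock :: Γ) n X ↔ Usable Γ n X ∧ Mobile X := by
  constructor
  · rintro ⟨b, hl, hm⟩
    cases hl with | thereLock hl => exact ⟨⟨_, hl, fun _ => hm rfl⟩, hm rfl⟩
  · rintro ⟨⟨b, hl, -⟩, hX⟩
    exact ⟨true, .thereLock hl, fun _ => hX⟩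

def IsRen (ρ : ℕ → ℕ) (Γ Δ : Ctx Op) : Prop :=
  ∀ n X, Usable Γ n X → Usable Δ (ρ n) X

theorem IsRen.lift {ρ : ℕ → ℕ} {Γ Δ : Ctx Op} (h : IsRen ρ Γ Δ) (A : VTy Op) :
    IsRen (liftR ρ) (CtxE.tyvar A :: Γ) (CtxE.tyvar A :: Δ)
  | 0, _, hu => hu.eq_of_zero ▸ usable_zero Δ A
  | _ + 1, _, hu => usable_succ_iff.2 (h _ _ (usable_succ_iff.1 hu))

theorem IsRen.lock {ρ : ℕ → ℕ} {Γ Δ : Ctx Op} (h : IsRen ρ Γ Δ) :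
    IsRen ρ (CtxE.lock :: Γ) (CtxE.lock :: Δ) := fun n X hu =>
  have hu := usable_lock_iff.1 hu
  usable_lock_iff.2 ⟨h n X hu.1, hu.2⟩

theorem isRen_succ (Γ : Ctx Op) (A : VTy Op) : IsRen Nat.succ Γ (CtxE.tyvar A :: Γ) :=
  fun _ _ => usable_succ_iff.2

theorem isRen_unlock (Γ : Ctx Op) : IsRen id (CtxE.lock :: Γ) Γ :=
  fun _ _ hu => (usable_lock_iff.1 hu).1

theorem isRen_lock_lock (Γ : Ctx Op) : IsRen id (CtxE.lock :: Γ) (CtxE.lock :: CtxE.lock :: Γ) :=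
  fun _ _ hu => usable_lock_iff.2 ⟨hu, (usable_lock_iff.1 hu).2⟩

def IsStrengthening (ρ : ℕ → ℕ) (Γ Δ : Ctx Op) : Prop :=
  ∀ n X, Usable Δ (ρ n) X → Usable Γ n X

theorem IsStrengthening.lift {ρ : ℕ → ℕ} {Γ Δ : Ctx Op} (h : IsStrengthening ρ Γ Δ)
    (A : VTy Op) : IsStrengthening (liftR ρ) (CtxE.tyvar A :: Γ) (CtxE.tyvar A :: Δ)
  | 0, _, hu => hu.eq_of_zero ▸ usable_zero Γ A
  | _ + 1, _, hu => usable_succ_iff.2 (h _ _ (usable_succ_iff.1 hu))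

theorem IsStrengthening.lock {ρ : ℕ → ℕ} {Γ Δ : Ctx Op} (h : IsStrengthening ρ Γ Δ) :
    IsStrengthening ρ (CtxE.lock :: Γ) (CtxE.lock :: Δ) := fun n X hu =>
  have hu := usable_lock_iff.1 hu
  usable_lock_iff.2 ⟨h n X hu.1, hu.2⟩

theorem isStrengthening_succ (Γ : Ctx Op) (A : VTy Op) :
    IsStrengthening Nat.succ Γ (CtxE.tyvar A :: Γ) :=
  fun _ _ => usable_succ_iff.1

theorem liftR_id : liftR id = id := by
  funext n; cases n <;> rfl

mutual
theorem renameV_id : ∀ V : Val Op, renameV id V = V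
  | .var _ | .unit => rfl
  | .pair a b => by simp [renameV, renameV_id a, renameV_id b]
  | .inl a | .inr a | .prom a | .box a => by simp [renameV, renameV_id a]
  | .lam m => by simp [renameV, liftR_id, renameC_id m]

theorem renameC_id : ∀ M : Comp Op, renameC id M = M
  | .ret v | .matchEmpty v => by simp [renameC, renameV_id v]
  | .app v w => by simp [renameC, renameV_id v, renameV_id w]
  | .letin m n | .spawn m n => by simp [renameC, liftR_id, renameC_id m, renameC_id n]
  | .matchPair v m | .await v m | .unbox v m =>
    by simp [renameC, liftR_id, renameV_id v, renameC_id m]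
  | .matchSum v m n => by simp [renameC, liftR_id, renameV_id v, renameC_id m, renameC_id n]
  | .sig _ v m | .int _ v m => by simp [renameC, renameV_id v, renameC_id m]
  | .handler _ m v n => by simp [renameC, liftR_id, renameC_id m, renameV_id v, renameC_id n]
end

end Contexts

section Typing

variable {Op : Type} [DecidableEq Op] {sg : Op → VTy Op}

theorem HasV.var_of_usable {Γ : Ctx Op} {n : ℕ} {X : VTy Op} (h : Usable Γ n X) :
    HasV sg Γ (.var n) X :=
  let ⟨_, hl, hm⟩ := h
  .var hl hm

mutual
theorem HasV.rename {Γ Δ : Ctx Op} {ρ : ℕ → ℕ} {V : Val Op} {X : VTy Op}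
    (h : HasV sg Γ V X) (hρ : IsRen ρ Γ Δ) : HasV sg Δ (renameV ρ V) X :=
  match h with
  | .var hl hm => .var_of_usable (hρ _ _ ⟨_, hl, hm⟩)
  | .unit => .unit
  | .pair a b => .pair (a.rename hρ) (b.rename hρ)
  | .inl a => .inl (a.rename hρ)
  | .inr b => .inr (b.rename hρ)
  | .lam m => .lam (m.rename (hρ.lift _))
  | .prom a => .prom (a.rename hρ)
  | .box a => .box (a.rename hρ.lock)

theorem HasC.rename {Γ Δ : Ctx Op} {ρ : ℕ → ℕ} {M : Comp Op} {X : VTy Op} {o : Set Op}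
    {ι : IAnn Op} (h : HasC sg Γ M X o ι) (hρ : IsRen ρ Γ Δ) :
    HasC sg Δ (renameC ρ M) X o ι :=
  match h with
  | .ret a => .ret (a.rename hρ)
  | .letin m n => .letin (m.rename hρ) (n.rename (hρ.lift _))
  | .app a b => .app (a.rename hρ) (b.rename hρ)
  | .matchPair a m => .matchPair (a.rename hρ) (m.rename ((hρ.lift _).lift _))
  | .matchEmpty a => .matchEmpty (a.rename hρ)
  | .matchSum a m n => .matchSum (a.rename hρ) (m.rename (hρ.lift _)) (n.rename (hρ.lift _))
  | .sig hop a m => .sig hop (a.rename hρ) (m.rename hρ)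
  | .int a m => .int (a.rename hρ) (m.rename hρ)
  | .handler h₁ h₂ h₃ m a n =>
    .handler h₁ h₂ h₃ (m.rename (((hρ.lift _).lift _).lift _)) (a.rename hρ)
      (n.rename (hρ.lift _))
  | .await a m => .await (a.rename hρ) (m.rename (hρ.lift _))
  | .unbox a m => .unbox (a.rename hρ) (m.rename (hρ.lift _))
  | .spawn m n => .spawn (m.rename hρ.lock) (n.rename hρ)
  | .subsume m ho hι => .subsume (m.rename hρ) ho hι
end

theorem HasV.of_lock_cons {Γ : Ctx Op} {V : Val Op} {X : VTy Op}
    (h : HasV sg (CtxE.lock :: Γ) V X) : HasV sg Γ V X := by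
  simpa [renameV_id] using h.rename (isRen_unlock Γ)

theorem HasC.of_lock_cons {Γ : Ctx Op} {M : Comp Op} {X : VTy Op} {o : Set Op} {ι : IAnn Op}
    (h : HasC sg (CtxE.lock :: Γ) M X o ι) : HasC sg Γ M X o ι := by
  simpa [renameC_id] using h.rename (isRen_unlock Γ)

theorem HasV.lock_cons_of_mobile {Γ : Ctx Op} {V : Val Op} {X : VTy Op} :
    HasV sg Γ V X → Mobile X → HasV sg (CtxE.lock :: Γ) V X
  | .var hl _, hX => .var (.thereLock hl) fun _ => hX
  | .unit, _ => .unit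
  | .pair a b, .prod hA hB => .pair (a.lock_cons_of_mobile hA) (b.lock_cons_of_mobile hB)
  | .inl a, .sum hA _ => .inl (a.lock_cons_of_mobile hA)
  | .inr b, .sum _ hB => .inr (b.lock_cons_of_mobile hB)
  | .box a, _ => .box (by simpa [renameV_id] using a.rename (isRen_lock_lock Γ))

def IsSubst (sg : Op → VTy Op) (σ : ℕ → Val Op) (Γ Δ : Ctx Op) : Prop :=
  ∀ n X, Usable Γ n X → HasV sg Δ (σ n) X

theorem IsSubst.lift {σ : ℕ → Val Op} {Γ Δ : Ctx Op} (h : IsSubst sg σ Γ Δ) (A : VTy Op) :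
    IsSubst sg (liftS σ) (CtxE.tyvar A :: Γ) (CtxE.tyvar A :: Δ)
  | 0, _, hu => by rw [hu.eq_of_zero]; exact .var_of_usable (usable_zero Δ A)
  | _ + 1, _, hu => (h _ _ (usable_succ_iff.1 hu)).rename (isRen_succ Δ A)

theorem IsSubst.lock {σ : ℕ → Val Op} {Γ Δ : Ctx Op} (h : IsSubst sg σ Γ Δ) :
    IsSubst sg σ (CtxE.lock :: Γ) (CtxE.lock :: Δ) := fun n X hu =>
  have hu := usable_lock_iff.1 hu
  (h n X hu.1).lock_cons_of_mobile hu.2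

mutual
theorem HasV.subst {Γ Δ : Ctx Op} {σ : ℕ → Val Op} {V : Val Op} {X : VTy Op}
    (h : HasV sg Γ V X) (hσ : IsSubst sg σ Γ Δ) : HasV sg Δ (substV σ V) X :=
  match h with
  | .var hl hm => hσ _ _ ⟨_, hl, hm⟩
  | .unit => .unit
  | .pair a b => .pair (a.subst hσ) (b.subst hσ)
  | .inl a => .inl (a.subst hσ)
  | .inr b => .inr (b.subst hσ)
  | .lam m => .lam (m.subst (hσ.lift _))
  | .prom a => .prom (a.subst hσ)
  | .box a => .box (a.subst hσ.lock)

theorem HasC.subst {Γ Δ : Ctx Op} {σ : ℕ → Val Op} {M : Comp Op} {X : VTy Op} {o : Set Op}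
    {ι : IAnn Op} (h : HasC sg Γ M X o ι) (hσ : IsSubst sg σ Γ Δ) :
    HasC sg Δ (substC σ M) X o ι :=
  match h with
  | .ret a => .ret (a.subst hσ)
  | .letin m n => .letin (m.subst hσ) (n.subst (hσ.lift _))
  | .app a b => .app (a.subst hσ) (b.subst hσ)
  | .matchPair a m => .matchPair (a.subst hσ) (m.subst ((hσ.lift _).lift _))
  | .matchEmpty a => .matchEmpty (a.subst hσ)
  | .matchSum a m n => .matchSum (a.subst hσ) (m.subst (hσ.lift _)) (n.subst (hσ.lift _))
  | .sig hop a m => .sig hop (a.subst hσ) (m.subst hσ)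
  | .int a m => .int (a.subst hσ) (m.subst hσ)
  | .handler h₁ h₂ h₃ m a n =>
    .handler h₁ h₂ h₃ (m.subst (((hσ.lift _).lift _).lift _)) (a.subst hσ)
      (n.subst (hσ.lift _))
  | .await a m => .await (a.subst hσ) (m.subst (hσ.lift _))
  | .unbox a m => .unbox (a.subst hσ) (m.subst (hσ.lift _))
  | .spawn m n => .spawn (m.subst hσ.lock) (n.subst hσ)
  | .subsume m ho hι => .subsume (m.subst hσ) ho hι
end

theorem isSubst_sub1 {Γ : Ctx Op} {V : Val Op} {A : VTy Op} (hV : HasV sg Γ V A) :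
    IsSubst sg (sub1 V) (CtxE.tyvar A :: Γ) Γ
  | 0, _, hu => hu.eq_of_zero ▸ hV
  | _ + 1, _, hu => .var_of_usable (usable_succ_iff.1 hu)

theorem isSubst_sub2 {Γ : Ctx Op} {V W : Val Op} {A B : VTy Op}
    (hV : HasV sg Γ V A) (hW : HasV sg Γ W B) :
    IsSubst sg (sub2 V W) (CtxE.tyvar B :: CtxE.tyvar A :: Γ) Γ
  | 0, _, hu => hu.eq_of_zero ▸ hW
  | 1, _, hu => (usable_succ_iff.1 hu).eq_of_zero ▸ hV
  | _ + 2, _, hu => .var_of_usable (usable_succ_iff.1 (usable_succ_iff.1 hu))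

theorem isSubst_sub3 {Γ : Ctx Op} {V R W : Val Op} {A B C : VTy Op}
    (hV : HasV sg Γ V A) (hR : HasV sg Γ R B) (hW : HasV sg Γ W C) :
    IsSubst sg (sub3 V R W) (CtxE.tyvar C :: CtxE.tyvar B :: CtxE.tyvar A :: Γ) Γ
  | 0, _, hu => hu.eq_of_zero ▸ hW
  | 1, _, hu => (usable_succ_iff.1 hu).eq_of_zero ▸ hR
  | 2, _, hu => (usable_succ_iff.1 (usable_succ_iff.1 hu)).eq_of_zero ▸ hV
  | _ + 3, _, hu =>
    .var_of_usable (usable_succ_iff.1 (usable_succ_iff.1 (usable_succ_iff.1 hu)))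

mutual
theorem HasV.strengthen {Γ Δ : Ctx Op} {ρ : ℕ → ℕ} {W V : Val Op} {X : VTy Op}
    (h : HasV sg Δ W X) (hρ : IsStrengthening ρ Γ Δ) (e : W = renameV ρ V) : HasV sg Γ V X :=
  match h with
  | .var hl hm => by
    cases V <;> simp only [renameV, reduceCtorEq, Val.var.injEq] at e
    subst e
    exact .var_of_usable (hρ _ _ ⟨_, hl, hm⟩)
  | .unit => by
    cases V <;> simp only [renameV, reduceCtorEq] at e
    exact .unit
  | .pair a b => by
    cases V <;> simp only [renameV, reduceCtorEq, Val.pair.injEq] at e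
    exact .pair (a.strengthen hρ e.1) (b.strengthen hρ e.2)
  | .inl a => by
    cases V <;> simp only [renameV, reduceCtorEq, Val.inl.injEq] at e
    exact .inl (a.strengthen hρ e)
  | .inr b => by
    cases V <;> simp only [renameV, reduceCtorEq, Val.inr.injEq] at e
    exact .inr (b.strengthen hρ e)
  | .lam m => by
    cases V <;> simp only [renameV, reduceCtorEq, Val.lam.injEq] at e
    exact .lam (m.strengthen (hρ.lift _) e)
  | .prom a => by
    cases V <;> simp only [renameV, reduceCtorEq, Val.prom.injEq] at e
    exact .prom (a.strengthen hρ e)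
  | .box a => by
    cases V <;> simp only [renameV, reduceCtorEq, Val.box.injEq] at e
    exact .box (a.strengthen hρ.lock e)

theorem HasC.strengthen {Γ Δ : Ctx Op} {ρ : ℕ → ℕ} {N : Comp Op} {X : VTy Op} {o : Set Op}
    {ι : IAnn Op} {M : Comp Op} (h : HasC sg Δ N X o ι) (hρ : IsStrengthening ρ Γ Δ)
    (e : N = renameC ρ M) : HasC sg Γ M X o ι :=
  match h with
  | .ret a => by
    cases M <;> simp only [renameC, reduceCtorEq, Comp.ret.injEq] at e
    exact .ret (a.strengthen hρ e)
  | .letin m n => by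
    cases M <;> simp only [renameC, reduceCtorEq, Comp.letin.injEq] at e
    exact .letin (m.strengthen hρ e.1) (n.strengthen (hρ.lift _) e.2)
  | .app a b => by
    cases M <;> simp only [renameC, reduceCtorEq, Comp.app.injEq] at e
    exact .app (a.strengthen hρ e.1) (b.strengthen hρ e.2)
  | .matchPair a m => by
    cases M <;> simp only [renameC, reduceCtorEq, Comp.matchPair.injEq] at e
    exact .matchPair (a.strengthen hρ e.1) (m.strengthen ((hρ.lift _).lift _) e.2)
  | .matchEmpty a => by
    cases M <;> simp only [renameC, reduceCtorEq, Comp.matchEmpty.injEq] at e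
    exact .matchEmpty (a.strengthen hρ e)
  | .matchSum a m n => by
    cases M <;> simp only [renameC, reduceCtorEq, Comp.matchSum.injEq] at e
    exact .matchSum (a.strengthen hρ e.1) (m.strengthen (hρ.lift _) e.2.1)
      (n.strengthen (hρ.lift _) e.2.2)
  | .sig hop a m => by
    cases M <;> simp only [renameC, reduceCtorEq, Comp.sig.injEq] at e
    obtain ⟨rfl, ea, em⟩ := e
    exact .sig hop (a.strengthen hρ ea) (m.strengthen hρ em)
  | .int a m => by
    cases M <;> simp only [renameC, reduceCtorEq, Comp.int.injEq] at e
    obtain ⟨rfl, ea, em⟩ := e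
    exact .int (a.strengthen hρ ea) (m.strengthen hρ em)
  | .handler h₁ h₂ h₃ m a n => by
    cases M <;> simp only [renameC, reduceCtorEq, Comp.handler.injEq] at e
    obtain ⟨rfl, em, ea, en⟩ := e
    exact .handler h₁ h₂ h₃ (m.strengthen (((hρ.lift _).lift _).lift _) em)
      (a.strengthen hρ ea) (n.strengthen (hρ.lift _) en)
  | .await a m => by
    cases M <;> simp only [renameC, reduceCtorEq, Comp.await.injEq] at e
    exact .await (a.strengthen hρ e.1) (m.strengthen (hρ.lift _) e.2)
  | .unbox a m => by
    cases M <;> simp only [renameC, reduceCtorEq, Comp.unbox.injEq] at e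
    exact .unbox (a.strengthen hρ e.1) (m.strengthen (hρ.lift _) e.2)
  | .spawn m n => by
    cases M <;> simp only [renameC, reduceCtorEq, Comp.spawn.injEq] at e
    exact .spawn (m.strengthen hρ.lock e.1) (n.strengthen hρ e.2)
  | .subsume m ho hι => .subsume (m.strengthen hρ e) ho hι
end

end Typing

section Inversion

variable {Op : Type} [DecidableEq Op]

/-- The rules of `HasC` other than subsumption. -/
inductive HasCHead (sg : Op → VTy Op) :
    Ctx Op → Comp Op → VTy Op → Set Op → IAnn Op → Prop where
  | ret {Γ V X o ι} : HasV sg Γ V X → HasCHead sg Γ (.ret V) X o ι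
  | letin {Γ M N X Y o ι} : HasC sg Γ M X o ι →
      HasC sg (CtxE.tyvar X :: Γ) N Y o ι → HasCHead sg Γ (.letin M N) Y o ι
  | app {Γ V W X Y o ι} : HasV sg Γ V (.fn X Y o ι) → HasV sg Γ W X →
      HasCHead sg Γ (.app V W) Y o ι
  | matchPair {Γ V M X Y Z o ι} : HasV sg Γ V (.prod X Y) →
      HasC sg (CtxE.tyvar Y :: CtxE.tyvar X :: Γ) M Z o ι →
      HasCHead sg Γ (.matchPair V M) Z o ι
  | matchEmpty {Γ V Z o ι} : HasV sg Γ V .empty →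
      HasCHead sg Γ (.matchEmpty V) Z o ι
  | matchSum {Γ V M N X Y Z o ι} : HasV sg Γ V (.sum X Y) →
      HasC sg (CtxE.tyvar X :: Γ) M Z o ι →
      HasC sg (CtxE.tyvar Y :: Γ) N Z o ι →
      HasCHead sg Γ (.matchSum V M N) Z o ι
  | sig {Γ op V M X o ι} : op ∈ o → HasV sg Γ V (sg op) →
      HasC sg Γ M X o ι → HasCHead sg Γ (.sig op V M) X o ι
  | int {Γ op V M X o ι} : HasV sg Γ V (sg op) → HasC sg Γ M X o ι →
      HasCHead sg Γ (.int op V M) X (IAnn.act op (o, ι)).1 (IAnn.act op (o, ι)).2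
  | handler {Γ op M V N S X Y o ι o' ι' o''} :
      ι.val [op] = some o'' → o' ⊆ o'' → IAnn.le ι' (ι.subtree op) →
      HasC sg (CtxE.tyvar S ::
               CtxE.tyvar (.fn S (.prom X) (∅ : Set Op) (IAnn.single op o' ι')) ::
               CtxE.tyvar (sg op) :: Γ) M (.prom X) o' ι' →
      HasV sg Γ V S →
      HasC sg (CtxE.tyvar (.prom X) :: Γ) N Y o ι →
      HasCHead sg Γ (.handler op M V N) Y o ι
  | await {Γ V M X Y o ι} : HasV sg Γ V (.prom X) →
      HasC sg (CtxE.tyvar X :: Γ) M Y o ι → HasCHead sg Γ (.await V M) Y o ι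
  | unbox {Γ V M X Y o ι} : HasV sg Γ V (.box X) →
      HasC sg (CtxE.tyvar X :: Γ) M Y o ι → HasCHead sg Γ (.unbox V M) Y o ι
  | spawn {Γ M N X Y o ι o' ι'} : HasC sg (CtxE.lock :: Γ) M X o ι →
      HasC sg Γ N Y o' ι' → HasCHead sg Γ (.spawn M N) Y o' ι'

variable {sg : Op → VTy Op}

theorem HasC.exists_head {Γ : Ctx Op} {M : Comp Op} {X : VTy Op} {o : Set Op} {ι : IAnn Op} :
    HasC sg Γ M X o ι → ∃ o₀ ι₀, o₀ ⊆ o ∧ IAnn.le ι₀ ι ∧ HasCHead sg Γ M X o₀ ι₀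
  | .ret a => ⟨_, _, subset_rfl, IAnn.le_refl _, .ret a⟩
  | .letin m n => ⟨_, _, subset_rfl, IAnn.le_refl _, .letin m n⟩
  | .app a b => ⟨_, _, subset_rfl, IAnn.le_refl _, .app a b⟩
  | .matchPair a m => ⟨_, _, subset_rfl, IAnn.le_refl _, .matchPair a m⟩
  | .matchEmpty a => ⟨_, _, subset_rfl, IAnn.le_refl _, .matchEmpty a⟩
  | .matchSum a m n => ⟨_, _, subset_rfl, IAnn.le_refl _, .matchSum a m n⟩
  | .sig hop a m => ⟨_, _, subset_rfl, IAnn.le_refl _, .sig hop a m⟩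
  | .int a m => ⟨_, _, subset_rfl, IAnn.le_refl _, .int a m⟩
  | .handler h₁ h₂ h₃ m a n => ⟨_, _, subset_rfl, IAnn.le_refl _, .handler h₁ h₂ h₃ m a n⟩
  | .await a m => ⟨_, _, subset_rfl, IAnn.le_refl _, .await a m⟩
  | .unbox a m => ⟨_, _, subset_rfl, IAnn.le_refl _, .unbox a m⟩
  | .spawn m n => ⟨_, _, subset_rfl, IAnn.le_refl _, .spawn m n⟩
  | .subsume m ho hι =>
    let ⟨o₀, ι₀, ho₀, hι₀, hm⟩ := m.exists_head
    ⟨o₀, ι₀, ho₀.trans ho, IAnn.le_trans hι₀ hι, hm⟩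

variable {Γ : Ctx Op} {X Y : VTy Op} {o : Set Op} {ι : IAnn Op}

theorem HasC.inv_ret {V : Val Op} (h : HasC sg Γ (.ret V) X o ι) : HasV sg Γ V X := by
  obtain ⟨_, _, -, -, hh⟩ := h.exists_head
  cases hh with
  | ret hV => exact hV

theorem HasC.inv_letin {M N : Comp Op} (h : HasC sg Γ (.letin M N) Y o ι) :
    ∃ X, HasC sg Γ M X o ι ∧ HasC sg (CtxE.tyvar X :: Γ) N Y o ι := by
  obtain ⟨_, _, ho, hι, hh⟩ := h.exists_head
  cases hh with
  | letin hM hN => exact ⟨_, hM.subsume ho hι, hN.subsume ho hι⟩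

theorem HasC.inv_app {V W : Val Op} (h : HasC sg Γ (.app V W) Y o ι) :
    ∃ X o₀ ι₀, o₀ ⊆ o ∧ IAnn.le ι₀ ι ∧ HasV sg Γ V (.fn X Y o₀ ι₀) ∧ HasV sg Γ W X := by
  obtain ⟨_, _, ho, hι, hh⟩ := h.exists_head
  cases hh with
  | app hV hW => exact ⟨_, _, _, ho, hι, hV, hW⟩

theorem HasC.inv_matchPair {V : Val Op} {M : Comp Op} {Z : VTy Op}
    (h : HasC sg Γ (.matchPair V M) Z o ι) :
    ∃ X Y, HasV sg Γ V (.prod X Y) ∧ HasC sg (CtxE.tyvar Y :: CtxE.tyvar X :: Γ) M Z o ι := by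
  obtain ⟨_, _, ho, hι, hh⟩ := h.exists_head
  cases hh with
  | matchPair hV hM => exact ⟨_, _, hV, hM.subsume ho hι⟩

theorem HasC.inv_matchSum {V : Val Op} {M N : Comp Op} {Z : VTy Op}
    (h : HasC sg Γ (.matchSum V M N) Z o ι) :
    ∃ X Y, HasV sg Γ V (.sum X Y) ∧ HasC sg (CtxE.tyvar X :: Γ) M Z o ι ∧
      HasC sg (CtxE.tyvar Y :: Γ) N Z o ι := by
  obtain ⟨_, _, ho, hι, hh⟩ := h.exists_head
  cases hh with
  | matchSum hV hM hN => exact ⟨_, _, hV, hM.subsume ho hι, hN.subsume ho hι⟩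

theorem HasC.inv_sig {op : Op} {V : Val Op} {M : Comp Op} (h : HasC sg Γ (.sig op V M) X o ι) :
    op ∈ o ∧ HasV sg Γ V (sg op) ∧ HasC sg Γ M X o ι := by
  obtain ⟨_, _, ho, hι, hh⟩ := h.exists_head
  cases hh with
  | sig hop hV hM => exact ⟨ho hop, hV, hM.subsume ho hι⟩

theorem HasC.inv_int {op : Op} {V : Val Op} {M : Comp Op} (h : HasC sg Γ (.int op V M) X o ι) :
    ∃ o₀ ι₀, (IAnn.act op (o₀, ι₀)).1 ⊆ o ∧ IAnn.le (IAnn.act op (o₀, ι₀)).2 ι ∧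
      HasV sg Γ V (sg op) ∧ HasC sg Γ M X o₀ ι₀ := by
  obtain ⟨_, _, ho, hι, hh⟩ := h.exists_head
  cases hh with
  | int hV hM => exact ⟨_, _, ho, hι, hV, hM⟩

theorem HasC.inv_handler {op : Op} {M N : Comp Op} {V : Val Op}
    (h : HasC sg Γ (.handler op M V N) Y o ι) :
    ∃ S X o' ι' o'', ι.val [op] = some o'' ∧ o' ⊆ o'' ∧ IAnn.le ι' (ι.subtree op) ∧
      HasC sg (CtxE.tyvar S ::
               CtxE.tyvar (.fn S (.prom X) (∅ : Set Op) (IAnn.single op o' ι')) ::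
               CtxE.tyvar (sg op) :: Γ) M (.prom X) o' ι' ∧
      HasV sg Γ V S ∧ HasC sg (CtxE.tyvar (.prom X) :: Γ) N Y o ι := by
  obtain ⟨_, _, ho, hι, hh⟩ := h.exists_head
  cases hh with
  | handler hval ho' hι' hM hV hN =>
    obtain ⟨o'', hval', ho''⟩ := hι _ _ hval
    exact ⟨_, _, _, _, o'', hval', ho'.trans ho'', IAnn.le_trans hι' (IAnn.subtree_mono hι _),
      hM, hV, hN.subsume ho hι⟩

theorem HasC.inv_await {V : Val Op} {M : Comp Op} (h : HasC sg Γ (.await V M) Y o ι) :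
    ∃ X, HasV sg Γ V (.prom X) ∧ HasC sg (CtxE.tyvar X :: Γ) M Y o ι := by
  obtain ⟨_, _, ho, hι, hh⟩ := h.exists_head
  cases hh with
  | await hV hM => exact ⟨_, hV, hM.subsume ho hι⟩

theorem HasC.inv_unbox {V : Val Op} {M : Comp Op} (h : HasC sg Γ (.unbox V M) Y o ι) :
    ∃ X, HasV sg Γ V (.box X) ∧ HasC sg (CtxE.tyvar X :: Γ) M Y o ι := by
  obtain ⟨_, _, ho, hι, hh⟩ := h.exists_head
  cases hh with
  | unbox hV hM => exact ⟨_, hV, hM.subsume ho hι⟩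

theorem HasC.inv_spawn {M N : Comp Op} (h : HasC sg Γ (.spawn M N) Y o ι) :
    ∃ X o' ι', HasC sg (CtxE.lock :: Γ) M X o' ι' ∧ HasC sg Γ N Y o ι := by
  obtain ⟨_, _, ho, hι, hh⟩ := h.exists_head
  cases hh with
  | spawn hM hN => exact ⟨_, _, _, hM, hN.subsume ho hι⟩

end Inversion

section Preservation

variable {Op : Type} [DecidableEq Op] {sg : Op → VTy Op}

theorem HasV.reinstall {Γ : Ctx Op} {op : Op} {M : Comp Op} {S X : VTy Op} {o : Set Op}
    {ι : IAnn Op}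
    (hM : HasC sg (CtxE.tyvar S :: CtxE.tyvar (.fn S (.prom X) ∅ (IAnn.single op o ι)) ::
      CtxE.tyvar (sg op) :: Γ) M (.prom X) o ι) :
    HasV sg Γ (reinstall op M) (.fn S (.prom X) ∅ (IAnn.single op o ι)) :=
  .lam <| .handler (IAnn.single_val_singleton op o ι) subset_rfl (IAnn.le_subtree_single op o ι)
    (hM.rename ((((isRen_succ Γ S).lift _).lift _).lift _))
    (.var_of_usable (usable_zero _ _)) (.ret (.var_of_usable (usable_zero _ _)))

theorem HasC.preservation_intHandler {Γ : Ctx Op} {op : Op} {V W : Val Op} {M N : Comp Op}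
    {X : VTy Op} {o : Set Op} {ι : IAnn Op} (h : HasC sg Γ (.int op V (.handler op M W N)) X o ι) :
    HasC sg Γ (.letin (substC (sub3 V (reinstall op M) W) M)
      (.int op (renameV Nat.succ V) N)) X o ι := by
  obtain ⟨o₀, ι₀, ho, hι, hV, hH⟩ := h.inv_int
  obtain ⟨S, Y, o', ι', o'', hval, ho', hι', hM, hW, hN⟩ := hH.inv_handler
  have hM' := hM.subst (isSubst_sub3 hV (HasV.reinstall hM) hW)
  refine .letin (hM'.subsume ?_ ?_) ((HasC.int (hV.rename (isRen_succ Γ _)) hN).subsume ho hι)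
  · exact (ho'.trans (IAnn.subset_fst_act (p := (o₀, ι₀)) hval)).trans ho
  · exact IAnn.le_trans hι' (IAnn.le_trans (IAnn.subtree_le_snd_act (p := (o₀, ι₀)) hval) hι)

theorem HasC.preservation_intHandlerNeq {Γ : Ctx Op} {op op' : Op} (hne : op ≠ op')
    {V W : Val Op} {M N : Comp Op} {X : VTy Op} {o : Set Op} {ι : IAnn Op}
    (h : HasC sg Γ (.int op' V (.handler op M W N)) X o ι) :
    HasC sg Γ (.handler op M W (.int op' (renameV Nat.succ V) N)) X o ι := by
  obtain ⟨o₀, ι₀, ho, hι, hV, hH⟩ := h.inv_int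
  obtain ⟨S, Y, o', ι', o'', hval, ho', hι', hM, hW, hN⟩ := hH.inv_handler
  obtain ⟨o₂, hval₂, ho₂⟩ := IAnn.exists_val_act_cons_of_ne (p := (o₀, ι₀)) hne hval
  obtain ⟨o₃, hval₃, ho₃⟩ := hι _ _ hval₂
  have hsub := IAnn.subtree_le_subtree_act_of_ne (p := (o₀, ι₀)) hne
  refine .handler hval₃ (ho'.trans (ho₂.trans ho₃))
    (IAnn.le_trans hι' (IAnn.le_trans hsub (IAnn.subtree_mono hι op))) hM hW ?_
  exact (HasC.int (hV.rename (isRen_succ Γ _)) hN).subsume ho hι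

theorem HasC.preservation {Γ : Ctx Op} {M N : Comp Op} {X : VTy Op} {o : Set Op} {ι : IAnn Op}
    (h : HasC sg Γ M X o ι) (hs : Step M N) : HasC sg Γ N X o ι := by
  induction hs generalizing Γ X o ι with
  | beta =>
    obtain ⟨_, _, _, ho, hι, hf, hV⟩ := h.inv_app
    cases hf with | lam hM => exact (hM.subst (isSubst_sub1 hV)).subsume ho hι
  | letRet =>
    obtain ⟨_, hM, hN⟩ := h.inv_letin
    exact hN.subst (isSubst_sub1 hM.inv_ret)
  | matchPair =>
    obtain ⟨_, _, hp, hM⟩ := h.inv_matchPair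
    cases hp with | pair hV hW => exact hM.subst (isSubst_sub2 hV hW)
  | matchInl =>
    obtain ⟨_, _, hi, hM, -⟩ := h.inv_matchSum
    cases hi with | inl hV => exact hM.subst (isSubst_sub1 hV)
  | matchInr =>
    obtain ⟨_, _, hi, -, hN⟩ := h.inv_matchSum
    cases hi with | inr hW => exact hN.subst (isSubst_sub1 hW)
  | letSig =>
    obtain ⟨_, hS, hN⟩ := h.inv_letin
    obtain ⟨hop, hV, hM⟩ := hS.inv_sig
    exact .sig hop hV (.letin hM hN)
  | letHandler =>
    obtain ⟨_, hH, hN₂⟩ := h.inv_letin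
    obtain ⟨_, _, _, _, _, hval, ho', hι', hM, hV, hN₁⟩ := hH.inv_handler
    exact .handler hval ho' hι' hM hV (.letin hN₁ (hN₂.rename ((isRen_succ Γ _).lift _)))
  | letAwait =>
    obtain ⟨_, hA, hN⟩ := h.inv_letin
    obtain ⟨_, hV, hM⟩ := hA.inv_await
    exact .await hV (.letin hM (hN.rename ((isRen_succ Γ _).lift _)))
  | letSpawn =>
    obtain ⟨_, hS, hN₂⟩ := h.inv_letin
    obtain ⟨_, _, _, hM, hN₁⟩ := hS.inv_spawn
    exact .spawn hM (.letin hN₁ hN₂)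
  | handlerSig =>
    obtain ⟨_, _, _, _, _, hval, ho', hι', hM, hV, hS⟩ := h.inv_handler
    obtain ⟨hop, hW, hN⟩ := hS.inv_sig
    exact .sig hop (hW.strengthen (isStrengthening_succ Γ _) rfl) (.handler hval ho' hι' hM hV hN)
  | handlerSpawn =>
    obtain ⟨_, _, _, _, _, hval, ho', hι', hM, hV, hS⟩ := h.inv_handler
    obtain ⟨_, _, _, hN₁, hN₂⟩ := hS.inv_spawn
    exact .spawn (hN₁.strengthen (isStrengthening_succ Γ _).lock rfl)
      (.handler hval ho' hι' hM hV hN₂)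
  | intRet =>
    obtain ⟨_, _, -, -, -, hM⟩ := h.inv_int
    exact .ret hM.inv_ret
  | intSig =>
    obtain ⟨o₀, ι₀, ho, hι, hV, hS⟩ := h.inv_int
    obtain ⟨hop, hW, hM⟩ := hS.inv_sig
    exact (HasC.sig (IAnn.fst_subset_fst_act _ (o₀, ι₀) hop) hW (.int hV hM)).subsume ho hι
  | intHandler => exact h.preservation_intHandler
  | intHandlerNeq hne => exact h.preservation_intHandlerNeq hne
  | intAwait =>
    obtain ⟨_, _, ho, hι, hV, hA⟩ := h.inv_int
    obtain ⟨_, hW, hM⟩ := hA.inv_await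
    exact (HasC.await hW (.int (hV.rename (isRen_succ Γ _)) hM)).subsume ho hι
  | intSpawn =>
    obtain ⟨_, _, ho, hι, hV, hS⟩ := h.inv_int
    obtain ⟨_, _, _, hM, hN⟩ := hS.inv_spawn
    exact (HasC.spawn hM (.int hV hN)).subsume ho hι
  | awaitProm =>
    obtain ⟨_, hp, hM⟩ := h.inv_await
    cases hp with | prom hV => exact hM.subst (isSubst_sub1 hV)
  | unboxBox =>
    obtain ⟨_, hb, hM⟩ := h.inv_unbox
    cases hb with | box hV => exact hM.subst (isSubst_sub1 hV.of_lock_cons)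
  | ctxLet _ ih =>
    obtain ⟨_, hM, hN⟩ := h.inv_letin
    exact .letin (ih hM) hN
  | ctxSig _ ih =>
    obtain ⟨hop, hV, hM⟩ := h.inv_sig
    exact .sig hop hV (ih hM)
  | ctxInt _ ih =>
    obtain ⟨_, _, ho, hι, hV, hM⟩ := h.inv_int
    exact (HasC.int hV (ih hM)).subsume ho hι
  | ctxHandler _ ih =>
    obtain ⟨_, _, _, _, _, hval, ho', hι', hM, hV, hN⟩ := h.inv_handler
    exact .handler hval ho' hι' hM hV (ih hN)
  | ctxSpawn _ ih =>
    obtain ⟨_, _, _, hM, hN⟩ := h.inv_spawn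
    exact .spawn hM (ih hN)

end Preservation

section Processes

variable {Op : Type} [DecidableEq Op] {sg : Op → VTy Op} {Γ : Ctx Op}

theorem HasP.preservation_run {M : Comp Op} {Q : Proc Op} {C : PTy (VTy Op) Op}
    (h : HasP sg Γ (.run M) C) (hs : PStep (.run M) Q) : ∃ D, PTy.Red C D ∧ HasP sg Γ Q D := by
  cases h with
  | run hM =>
    cases hs with
    | run hs => exact ⟨_, .refl _, .run (hM.preservation hs)⟩
    | hoist =>
      obtain ⟨hop, hV, hM⟩ := hM.inv_sig
      exact ⟨_, .refl _, .sig hop hV (.run hM)⟩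
    | spawn =>
      obtain ⟨_, _, _, hM, hN⟩ := hM.inv_spawn
      exact ⟨_, .spawnR _ _ _ _ _ _, .par (.run hM.of_lock_cons) (.run hN)⟩

theorem HasP.broadcast_left {op : Op} {V : Val Op} {P Q : Proc Op} {C D : PTy (VTy Op) Op}
    (hP : HasP sg Γ (.sig op V P) C) (hQ : HasP sg Γ Q D) :
    HasP sg Γ (.sig op V (.par P (.int op V Q))) (.par C (PTy.pact op D)) := by
  cases hP with
  | sig hop hV hP => exact .sig (Set.mem_union_left _ hop) hV (.par hP (.int hV hQ))

theorem HasP.broadcast_right {op : Op} {V : Val Op} {P Q : Proc Op} {C D : PTy (VTy Op) Op}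
    (hP : HasP sg Γ P C) (hQ : HasP sg Γ (.sig op V Q) D) :
    HasP sg Γ (.sig op V (.par (.int op V P) Q)) (.par (PTy.pact op C) D) := by
  cases hQ with
  | sig hop hV hQ => exact .sig (Set.mem_union_right _ hop) hV (.par (.int hV hP) hQ)

end Processes

/-- Type preservation for processes: if `Γ ⊢ P : C` and `P ⇝ Q`, then there
is a process type `D` with `C ⇝ D` (process type reduction) and `Γ ⊢ Q : D`.
(The signature `sg` assigns mobile payload types to all names.) -/
theorem preservation_processes {Op : Type} [DecidableEq Op]
    (sg : Op → VTy Op) (hmob : ∀ op : Op, Mobile (sg op))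
    (Γ : Ctx Op) (P Q : Proc Op) (C : PTy (VTy Op) Op)
    (ht : HasP sg Γ P C) (hs : PStep P Q) :
    ∃ D : PTy (VTy Op) Op, PTy.Red C D ∧ HasP sg Γ Q D := by
  induction hs generalizing C with
  | run hs => exact ht.preservation_run (.run hs)
  | hoist => exact ht.preservation_run .hoist
  | spawn => exact ht.preservation_run .spawn
  | bcastL =>
    cases ht with | par hP hQ => exact ⟨_, .par (.refl _) (PTy.red_pact _ _), hP.broadcast_left hQ⟩
  | bcastR =>
    cases ht with | par hP hQ => exact ⟨_, .par (PTy.red_pact _ _) (.refl _), hP.broadcast_right hQ⟩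
  | intRun =>
    cases ht with | int hV hP => cases hP with | run hM => exact ⟨_, .refl _, .run (.int hV hM)⟩
  | intPar =>
    cases ht with
    | int hV hP => cases hP with | par hP hQ => exact ⟨_, .refl _, .par (.int hV hP) (.int hV hQ)⟩
  | intSig =>
    cases ht with
    | int hV hP =>
      cases hP with
      | sig hop hW hP =>
        exact ⟨_, .refl _, .sig (PTy.signalsOf_subset_pact _ _ hop) hW (.int hV hP)⟩
  | ctxParL _ ih =>
    cases ht with
    | par hP hQ =>
      exact (ih _ hP).elim fun _ ⟨hCD, hD⟩ => ⟨_, .par hCD (.refl _), .par hD hQ⟩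
  | ctxParR _ ih =>
    cases ht with
    | par hP hQ =>
      exact (ih _ hQ).elim fun _ ⟨hCD, hD⟩ => ⟨_, .par (.refl _) hCD, .par hP hD⟩
  | ctxSig _ ih =>
    cases ht with
    | sig hop hV hP =>
      exact (ih _ hP).elim fun _ ⟨hCD, hD⟩ => ⟨_, hCD, .sig (hCD.signalsOf_subset hop) hV hD⟩
  | ctxInt _ ih =>
    cases ht with
    | int hV hP =>
      exact (ih _ hP).elim fun _ ⟨hCD, hD⟩ => ⟨_, hCD.pact _, .int hV hD⟩
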